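/- Let M ≥ 2 be an integer and let c ∈ (0,1) be a constant such that |𝑃_M| ≥ c·M/log M, where 𝑃_M is the set of primes p with ⌈M/2⌉ < p ≤ M. Let d ≥ 1 and let f : ℝ^d → ℂ be given by an absolutely convergent Fourier series f(x) = Σ_{k∈ℤ^d} ĉ(k)·exp(2πi k·x) whose coefficients satisfy ‖f‖ := Σ_{k∈ℤ^d} |ĉ(k)|·max(1, log|k|_∞) < ∞. Then the QMC rule based on the composite Korobov point set U_{M,d}^comp satisfies |ĉ(0) − (1/N_U) Σ_{p∈𝑃_M} Σ_{a=0}^{p−1} Σ_{n=0}^{p−1} f(x_{a,n}^{(p)})| ≤ (8d/(c·M))·‖f‖, where N_U = Σ_{p∈𝑃_M} p^2 and x_{a,n}^{(p)} = ({an/p}, {an^2/p}, …, {an^d/p}). Consequently, since N_U ≤ M^3, the error is at most (8d/(c·N_U^{1/3}))·‖f‖. -/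

import Mathlib

/-!
Expanding `f` in its Fourier series, the integration error of the equal-weight rule is
`∑_{k ≠ 0} ĉ(k) · (1/N_U) ∑_{x ∈ U} e(k·x)`. For a single prime `p`, summing `e(k·x_{a,n})`
over `a` first gives `p` or `0` according as `p` divides `∑ⱼ kⱼ nʲ⁺¹`, so the sum over
`U_{p,d}` is `p` times the number of roots modulo `p` of the polynomial `∑ⱼ kⱼ Xʲ⁺¹`.
Fix `j` with `kⱼ ≠ 0`. If `p ∤ kⱼ` there are at most `d` roots by Lagrange's theorem.
The primes `p ∣ kⱼ` of `𝑃_M` are few: their product divides `kⱼ` and each exceeds `M/2`,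
so they contribute `∑ p² ≤ M² log |kⱼ| / log M`. Since `N_U ≥ |𝑃_M| M²/4 ≥ c M³ / (4 log M)`,
every normalized exponential sum is at most `(8d / (cM)) max(1, log |k|_∞)`.
-/

/-- `𝑃_M`: the set of primes `p` with `⌈M/2⌉ < p ≤ M` (note `⌈M/2⌉ = (M+1)/2` in `ℕ`). -/
def primesInDyadic (M : ℕ) : Finset ℕ :=
  (Finset.range (M + 1)).filter fun p => Nat.Prime p ∧ (M + 1) / 2 < p

open Finset Real

noncomputable section FourierSeries

variable {d : ℕ}

def fourierExp (k : Fin d → ℤ) (x : Fin d → ℝ) : ℂ :=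
  Complex.exp (2 * π * Complex.I * ∑ j, (k j : ℂ) * (x j : ℂ))

def logWeight (k : Fin d → ℤ) : ℝ :=
  max 1 (Real.log ((Finset.univ.sup fun j : Fin d => (k j).natAbs : ℕ) : ℝ))

lemma one_le_logWeight (k : Fin d → ℤ) : 1 ≤ logWeight k := le_max_left _ _

lemma log_natAbs_le_logWeight {k : Fin d → ℤ} (j : Fin d) (hj : k j ≠ 0) :
    Real.log (k j).natAbs ≤ logWeight k := by
  refine le_max_of_le_right (Real.log_le_log (by positivity) ?_)
  exact_mod_cast Finset.le_sup (f := fun j => (k j).natAbs) (mem_univ j)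

lemma norm_fourierExp (k : Fin d → ℤ) (x : Fin d → ℝ) : ‖fourierExp k x‖ = 1 := by
  rw [fourierExp, show 2 * (π : ℂ) * Complex.I * ∑ j, (k j : ℂ) * (x j : ℂ)
      = ((2 * π * ∑ j, (k j : ℝ) * x j : ℝ) : ℂ) * Complex.I by push_cast; ring]
  exact Complex.norm_exp_ofReal_mul_I _

lemma fourierExp_zero (x : Fin d → ℝ) : fourierExp 0 x = 1 := by
  simp [fourierExp]

variable {ι : Type*} {coef : (Fin d → ℤ) → ℂ} {f : (Fin d → ℝ) → ℂ}

lemma norm_sum_fourierExp_le (k : Fin d → ℤ) (s : Finset ι) (x : ι → Fin d → ℝ) :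
    ‖∑ i ∈ s, fourierExp k (x i)‖ ≤ #s :=
  (norm_sum_le _ _).trans (by simp [norm_fourierExp])

lemma sum_eq_tsum_coef_mul_sum_fourierExp (habs : Summable fun k => ‖coef k‖)
    (hf : ∀ x, f x = ∑' k, coef k * fourierExp k x) (s : Finset ι) (x : ι → Fin d → ℝ) :
    ∑ i ∈ s, f (x i) = ∑' k, coef k * ∑ i ∈ s, fourierExp k (x i) := by
  have hsummable : ∀ y, Summable fun k => coef k * fourierExp k y := fun y =>
    Summable.of_norm (by simpa [norm_fourierExp] using habs)
  simp_rw [hf, mul_sum]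
  exact (Summable.tsum_finsetSum fun i _ => hsummable (x i)).symm

lemma norm_coef_zero_sub_average_le (habs : Summable fun k => ‖coef k‖)
    (hf : ∀ x, f x = ∑' k, coef k * fourierExp k x) {s : Finset ι} (hs : s.Nonempty)
    (x : ι → Fin d → ℝ) {w : (Fin d → ℤ) → ℝ} (hw : Summable fun k => ‖coef k‖ * w k)
    (hw0 : 0 ≤ w 0) (hbound : ∀ k ≠ 0, ‖∑ i ∈ s, fourierExp k (x i)‖ ≤ #s * w k) :
    ‖coef 0 - (1 / (#s : ℂ)) * ∑ i ∈ s, f (x i)‖ ≤ ∑' k, ‖coef k‖ * w k := by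
  set S := fun k => ∑ i ∈ s, fourierExp k (x i)
  have hcard : (0 : ℝ) < #s := by exact_mod_cast hs.card_pos
  have hnormS : ∀ k, ‖(1 / (#s : ℂ)) * S k‖ = ‖S k‖ / #s := fun k => by
    rw [norm_mul, norm_div, norm_one, Complex.norm_natCast, one_div_mul_eq_div]
  have hsummable : Summable fun k => coef k * ((1 / (#s : ℂ)) * S k) := by
    refine Summable.of_norm_bounded habs fun k => ?_
    rw [norm_mul, hnormS]
    refine mul_le_of_le_one_right (norm_nonneg _) ?_
    exact (div_le_one hcard).2 (norm_sum_fourierExp_le k s x)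
  have hS0 : coef 0 * ((1 / (#s : ℂ)) * S 0) = coef 0 := by
    have : (#s : ℂ) ≠ 0 := by exact_mod_cast hcard.ne'
    simp [S, fourierExp_zero, this]
  rw [sum_eq_tsum_coef_mul_sum_fourierExp habs hf, ← tsum_mul_left]
  simp_rw [mul_left_comm (1 / (#s : ℂ))]
  rw [hsummable.tsum_eq_add_tsum_ite 0, hS0, sub_add_cancel_left, norm_neg]
  refine tsum_of_norm_bounded hw.hasSum fun k => ?_
  split_ifs with hk
  · subst hk
    simpa using mul_nonneg (norm_nonneg (coef 0)) hw0
  · rw [norm_mul, hnormS]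
    gcongr
    exact (div_le_iff₀ hcard).2 (by simpa [mul_comm] using hbound k hk)

end FourierSeries

noncomputable section KorobovSums

open Polynomial

variable {d : ℕ}

lemma sum_range_exp_two_pi_I_mul_div {p : ℕ} (hp : p ≠ 0) (t : ℤ) :
    ∑ a ∈ range p, Complex.exp (2 * π * Complex.I * (a * t / p))
      = if (p : ℤ) ∣ t then (p : ℂ) else 0 := by
  have hζ := Complex.isPrimitiveRoot_exp p hp
  set ζ := Complex.exp (2 * π * Complex.I / p)
  have hterm : ∀ a : ℕ, Complex.exp (2 * π * Complex.I * (a * t / p)) = (ζ ^ t) ^ a := by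
    intro a
    rw [← zpow_natCast, ← zpow_mul, ← Complex.exp_int_mul]
    push_cast
    ring_nf
  simp only [hterm]
  split_ifs with ht
  · simp [(hζ.zpow_eq_one_iff_dvd t).2 ht]
  · have hζt : ζ ^ t ≠ 1 := mt (hζ.zpow_eq_one_iff_dvd t).1 ht
    rw [geom_sum_eq hζt, ← zpow_natCast, ← zpow_mul, mul_comm, zpow_mul, zpow_natCast,
      hζ.pow_eq_one, one_zpow, sub_self, zero_div]

lemma card_filter_dvd_eval_le_natDegree {p : ℕ} [Fact p.Prime] (g : ℤ[X])
    (hg : g.map (Int.castRingHom (ZMod p)) ≠ 0) :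
    #{n ∈ range p | (p : ℤ) ∣ g.eval ((n : ℕ) : ℤ)} ≤ g.natDegree := by
  set F := {n ∈ range p | (p : ℤ) ∣ g.eval ((n : ℕ) : ℤ)}
  have hinj : Set.InjOn (fun n : ℕ => (n : ZMod p)) F := by
    intro n₁ h₁ n₂ h₂ he
    simp only [F, coe_filter, mem_range, Set.mem_ofPred_eq] at h₁ h₂
    simpa [ZMod.val_cast_of_lt h₁.1, ZMod.val_cast_of_lt h₂.1] using congrArg ZMod.val he
  have hroots : (F.image fun n : ℕ => (n : ZMod p)).val ⊆ (g.map (Int.castRingHom _)).roots := by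
    intro z hz
    obtain ⟨n, hn, rfl⟩ := mem_image.1 (mem_def.2 hz)
    rw [mem_roots hg, IsRoot, eval_map,
      ← (ZMod.intCast_zmod_eq_zero_iff_dvd _ p).2 (mem_filter.1 hn).2]
    simp
  calc #F = _ := (card_image_of_injOn hinj).symm
    _ ≤ _ := card_le_degree_of_subset_roots hroots
    _ ≤ g.natDegree := natDegree_map_le

def korobovPoly (k : Fin d → ℤ) : ℤ[X] := ∑ j, C (k j) * X ^ ((j : ℕ) + 1)

lemma eval_korobovPoly (k : Fin d → ℤ) (n : ℤ) :
    (korobovPoly k).eval n = ∑ j, k j * n ^ ((j : ℕ) + 1) := by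
  simp [korobovPoly, eval_finsetSum]

lemma natDegree_korobovPoly_le (k : Fin d → ℤ) : (korobovPoly k).natDegree ≤ d :=
  natDegree_sum_le_of_forall_le _ _ fun j _ =>
    (natDegree_C_mul_X_pow_le _ _).trans (Nat.succ_le_of_lt j.isLt)

lemma coeff_korobovPoly (k : Fin d → ℤ) (j : Fin d) :
    (korobovPoly k).coeff ((j : ℕ) + 1) = k j := by
  rw [korobovPoly, finsetSum_coeff, sum_eq_single j]
  · simp
  · intro i _ hij
    simp [coeff_X_pow, Fin.val_eq_val, hij.symm]
  · simp

def korobovCount (p : ℕ) (k : Fin d → ℤ) : ℕ :=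
  #{n ∈ range p | (p : ℤ) ∣ (korobovPoly k).eval ((n : ℕ) : ℤ)}

lemma korobovCount_le (p : ℕ) (k : Fin d → ℤ) : korobovCount p k ≤ p :=
  (card_filter_le _ _).trans (card_range p).le

lemma korobovCount_le_of_not_dvd {p : ℕ} (hp : p.Prime) {k : Fin d → ℤ} {j : Fin d}
    (hj : ¬ (p : ℤ) ∣ k j) : korobovCount p k ≤ d := by
  have : Fact p.Prime := ⟨hp⟩
  refine (card_filter_dvd_eval_le_natDegree _ fun h => hj ?_).trans (natDegree_korobovPoly_le k)
  rw [← ZMod.intCast_zmod_eq_zero_iff_dvd, ← coeff_korobovPoly k j,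
    ← eq_intCast (Int.castRingHom _), ← coeff_map, h, coeff_zero]

def korobovPoint (p a n : ℕ) : Fin d → ℝ :=
  fun j => Int.fract ((a : ℝ) * (n : ℝ) ^ ((j : ℕ) + 1) / p)

lemma fourierExp_korobovPoint (k : Fin d → ℤ) (p a n : ℕ) :
    fourierExp k (korobovPoint p a n)
      = Complex.exp (2 * π * Complex.I * (a * ((korobovPoly k).eval (n : ℤ) : ℤ) / p)) := by
  set m : ℤ := ∑ j, k j * ⌊(a : ℝ) * (n : ℝ) ^ ((j : ℕ) + 1) / p⌋
  have hsum : ∑ j, (k j : ℂ) * (korobovPoint p a n j : ℂ)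
      = a * ((korobovPoly k).eval (n : ℤ) : ℤ) / p - m := by
    simp only [korobovPoint, ← Int.self_sub_floor, eval_korobovPoly, m]
    push_cast
    rw [mul_sum, sum_div, ← sum_sub_distrib]
    exact sum_congr rfl fun j _ => by ring
  rw [fourierExp, hsum, mul_sub, Complex.exp_sub, mul_comm _ (m : ℂ),
    Complex.exp_int_mul_two_pi_mul_I, div_one]

lemma sum_fourierExp_korobovPoint {p : ℕ} (hp : p ≠ 0) (k : Fin d → ℤ) :
    ∑ a ∈ range p, ∑ n ∈ range p, fourierExp k (korobovPoint p a n)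
      = p * korobovCount p k := by
  simp_rw [fourierExp_korobovPoint]
  rw [sum_comm]
  simp_rw [sum_range_exp_two_pi_I_mul_div hp]
  rw [← sum_filter, sum_const, nsmul_eq_mul, korobovCount, mul_comm]

end KorobovSums

section PrimesInDyadic

variable {M p : ℕ}

lemma mem_primesInDyadic : p ∈ primesInDyadic M ↔ p.Prime ∧ p ≤ M ∧ M + 1 < 2 * p := by
  simp only [primesInDyadic, mem_filter, mem_range]
  exact ⟨fun ⟨_, hp, h⟩ => ⟨hp, by omega, by omega⟩,
    fun ⟨hp, h₁, h₂⟩ => ⟨by omega, hp, by omega⟩⟩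

lemma le_two_mul_of_mem_primesInDyadic (hp : p ∈ primesInDyadic M) : (M : ℝ) ≤ 2 * p := by
  have := (mem_primesInDyadic.1 hp).2.2
  exact_mod_cast (show M ≤ 2 * p by omega)

lemma mul_log_le_mul_log_of_mem_primesInDyadic (hp : p ∈ primesInDyadic M) :
    (p : ℝ) * Real.log M ≤ M * Real.log p := by
  obtain ⟨hpp, hpM, hMp⟩ := mem_primesInDyadic.1 hp
  rcases hpM.eq_or_lt with rfl | hlt
  · rfl
  have hp3 : (3 : ℝ) ≤ p := by
    have := hpp.two_le
    exact_mod_cast (show 3 ≤ p by omega)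
  have he : exp 1 ≤ p := (exp_one_lt_d9.trans (by norm_num)).le.trans hp3
  have hpM' : (p : ℝ) ≤ M := by exact_mod_cast hpM
  have hlogdiv := log_div_self_antitoneOn he (he.trans hpM') hpM'
  rw [div_le_div_iff₀ (by linarith) (by linarith)] at hlogdiv
  linarith

lemma sum_log_le_log_natAbs_of_forall_dvd {S : Finset ℕ} (hS : ∀ p ∈ S, p.Prime) {m : ℤ}
    (hm : m ≠ 0) (hdvd : ∀ p ∈ S, (p : ℤ) ∣ m) :
    ∑ p ∈ S, Real.log p ≤ Real.log m.natAbs := by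
  have hprod : ∏ p ∈ S, p ∣ m.natAbs :=
    prod_primes_dvd _ (fun p hp => (hS p hp).prime) fun p hp => Int.natCast_dvd.1 (hdvd p hp)
  rw [← Real.log_prod fun p hp => by exact_mod_cast (hS p hp).ne_zero, ← Nat.cast_prod]
  refine Real.log_le_log (by exact_mod_cast prod_pos fun p hp => (hS p hp).pos) ?_
  exact_mod_cast Nat.le_of_dvd (Int.natAbs_pos.2 hm) hprod

lemma sum_sq_mul_log_le_of_dvd {m : ℤ} (hm : m ≠ 0) :
    (∑ p ∈ primesInDyadic M with ((p : ℕ) : ℤ) ∣ m, (p : ℝ) ^ 2) * Real.log M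
      ≤ M ^ 2 * Real.log m.natAbs := by
  have hterm : ∀ p ∈ primesInDyadic M, (p : ℝ) ^ 2 * Real.log M ≤ M ^ 2 * Real.log p := by
    intro p hp
    have hpM : (p : ℝ) ≤ M := by exact_mod_cast (mem_primesInDyadic.1 hp).2.1
    have hlogp : 0 ≤ Real.log p := Real.log_natCast_nonneg p
    nlinarith [mul_le_mul_of_nonneg_left (mul_log_le_mul_log_of_mem_primesInDyadic hp)
        (Nat.cast_nonneg (α := ℝ) p),
      mul_le_mul_of_nonneg_right hpM (by positivity : (0 : ℝ) ≤ M * Real.log p)]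
  calc _ = ∑ p ∈ primesInDyadic M with ((p : ℕ) : ℤ) ∣ m, (p : ℝ) ^ 2 * Real.log M :=
        sum_mul _ _ _
    _ ≤ ∑ p ∈ primesInDyadic M with ((p : ℕ) : ℤ) ∣ m, (M : ℝ) ^ 2 * Real.log p :=
      sum_le_sum fun p hp => hterm p (mem_filter.1 hp).1
    _ = M ^ 2 * ∑ p ∈ primesInDyadic M with ((p : ℕ) : ℤ) ∣ m, Real.log p :=
        (mul_sum _ _ _).symm
    _ ≤ M ^ 2 * Real.log m.natAbs := by
      gcongr
      exact sum_log_le_log_natAbs_of_forall_dvd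
        (fun p hp => (mem_primesInDyadic.1 (mem_filter.1 hp).1).1) hm
        fun p hp => (mem_filter.1 hp).2

lemma mul_sum_le_two_mul_sum_sq :
    (M : ℝ) * ∑ p ∈ primesInDyadic M, (p : ℝ) ≤ 2 * ∑ p ∈ primesInDyadic M, (p : ℝ) ^ 2 := by
  rw [mul_sum, mul_sum]
  refine sum_le_sum fun p hp => ?_
  have hMp := le_two_mul_of_mem_primesInDyadic hp
  nlinarith [Nat.cast_nonneg (α := ℝ) p]

lemma card_mul_sq_le_four_mul_sum_sq :
    (#(primesInDyadic M) : ℝ) * M ^ 2 ≤ 4 * ∑ p ∈ primesInDyadic M, (p : ℝ) ^ 2 := by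
  rw [← nsmul_eq_mul, ← sum_const, mul_sum]
  refine sum_le_sum fun p hp => ?_
  have hMp := le_two_mul_of_mem_primesInDyadic hp
  nlinarith [Nat.cast_nonneg (α := ℝ) M]

lemma mul_cube_le_four_mul_log_mul_sum_sq (hM : 2 ≤ M) {c : ℝ}
    (hcard : c * M / Real.log M ≤ #(primesInDyadic M)) :
    c * M ^ 3 ≤ 4 * Real.log M * ∑ p ∈ primesInDyadic M, (p : ℝ) ^ 2 := by
  have hlog : 0 < Real.log M := Real.log_pos (by exact_mod_cast hM)
  calc c * M ^ 3 = c * M * M ^ 2 := by ring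
    _ ≤ #(primesInDyadic M) * Real.log M * M ^ 2 :=
      mul_le_mul_of_nonneg_right ((div_le_iff₀ hlog).1 hcard) (by positivity)
    _ = Real.log M * (#(primesInDyadic M) * M ^ 2) := by ring
    _ ≤ Real.log M * (4 * ∑ p ∈ primesInDyadic M, (p : ℝ) ^ 2) :=
      mul_le_mul_of_nonneg_left card_mul_sq_le_four_mul_sum_sq hlog.le
    _ = _ := by ring

lemma sum_sq_primesInDyadic_le_cube : ∑ p ∈ primesInDyadic M, p ^ 2 ≤ M ^ 3 := by
  have hcard : #(primesInDyadic M) ≤ M := by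
    refine (card_le_card fun p hp => ?_).trans (Nat.card_Icc 1 M).le
    have := mem_primesInDyadic.1 hp
    exact mem_Icc.2 ⟨this.1.one_le, this.2.1⟩
  calc ∑ p ∈ primesInDyadic M, p ^ 2 ≤ ∑ _p ∈ primesInDyadic M, M ^ 2 :=
        sum_le_sum fun p hp => Nat.pow_le_pow_left (mem_primesInDyadic.1 hp).2.1 2
    _ = #(primesInDyadic M) * M ^ 2 := by rw [sum_const, smul_eq_mul]
    _ ≤ M * M ^ 2 := Nat.mul_le_mul_right _ hcard
    _ = M ^ 3 := by ring

lemma cast_sum_sq_primesInDyadic_rpow_le :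
    ((∑ p ∈ primesInDyadic M, p ^ 2 : ℕ) : ℝ) ^ ((1 : ℝ) / 3) ≤ M := by
  calc _ ≤ ((M : ℝ) ^ 3) ^ ((3 : ℕ) : ℝ)⁻¹ := by
        rw [one_div, Nat.cast_ofNat]
        gcongr
        exact_mod_cast sum_sq_primesInDyadic_le_cube
    _ = M := Real.pow_rpow_inv_natCast (Nat.cast_nonneg M) three_ne_zero

end PrimesInDyadic

section CompositeKorobov

variable {M d : ℕ}

def compositeKorobovIndex (M : ℕ) : Finset (Σ _ : ℕ, ℕ × ℕ) :=
  (primesInDyadic M).sigma fun p => range p ×ˢ range p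

lemma sum_compositeKorobovIndex {β : Type*} [AddCommMonoid β] (g : ℕ → ℕ → ℕ → β) :
    ∑ i ∈ compositeKorobovIndex M, g i.1 i.2.1 i.2.2
      = ∑ p ∈ primesInDyadic M, ∑ a ∈ range p, ∑ n ∈ range p, g p a n := by
  simp only [compositeKorobovIndex, sum_sigma, sum_product]

lemma compositeKorobovIndex_nonempty (hP : (primesInDyadic M).Nonempty) :
    (compositeKorobovIndex M).Nonempty :=
  let ⟨p, hp⟩ := hP
  ⟨⟨p, 0, 0⟩, mem_sigma.2 ⟨hp, by simpa using (mem_primesInDyadic.1 hp).1.pos⟩⟩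

lemma card_compositeKorobovIndex :
    #(compositeKorobovIndex M) = ∑ p ∈ primesInDyadic M, p ^ 2 := by
  simp [compositeKorobovIndex, card_sigma, sq]

lemma cast_sum_mul_korobovCount_le {k : Fin d → ℤ} (j : Fin d) :
    ((∑ p ∈ primesInDyadic M, p * korobovCount p k : ℕ) : ℝ)
      ≤ ∑ p ∈ primesInDyadic M with ((p : ℕ) : ℤ) ∣ k j, (p : ℝ) ^ 2
        + d * ∑ p ∈ primesInDyadic M, (p : ℝ) := by
  rw [sum_filter, mul_sum, ← sum_add_distrib]
  push_cast
  refine sum_le_sum fun p hp => ?_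
  have hpos : (0 : ℝ) ≤ p := Nat.cast_nonneg p
  split_ifs with hdvd
  · have : (korobovCount p k : ℝ) ≤ p := by exact_mod_cast korobovCount_le p k
    nlinarith
  · have : (korobovCount p k : ℝ) ≤ d := by
      exact_mod_cast korobovCount_le_of_not_dvd (mem_primesInDyadic.1 hp).1 hdvd
    nlinarith

lemma sum_mul_korobovCount_le (hM : 2 ≤ M) {c : ℝ} (hc0 : 0 < c) (hc1 : c < 1)
    (hcard : c * M / Real.log M ≤ #(primesInDyadic M)) {k : Fin d → ℤ} (hk : k ≠ 0) :
    ((∑ p ∈ primesInDyadic M, p * korobovCount p k : ℕ) : ℝ)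
      ≤ (∑ p ∈ primesInDyadic M, (p : ℝ) ^ 2) * (8 * d / (c * M) * logWeight k) := by
  obtain ⟨j, hj⟩ := Function.ne_iff.1 hk
  set N := ∑ p ∈ primesInDyadic M, (p : ℝ) ^ 2
  set A := ∑ p ∈ primesInDyadic M with ((p : ℕ) : ℤ) ∣ k j, (p : ℝ) ^ 2
  set S := ∑ p ∈ primesInDyadic M, (p : ℝ)
  set L := logWeight k
  have hd : (1 : ℝ) ≤ d := by exact_mod_cast j.pos
  have hlog : 0 < Real.log M := Real.log_pos (by exact_mod_cast hM)
  have hL : 1 ≤ L := one_le_logWeight k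
  have hcount := cast_sum_mul_korobovCount_le (M := M) (k := k) j
  have hA : A * Real.log M ≤ M ^ 2 * L :=
    (sum_sq_mul_log_le_of_dvd (by simpa using hj)).trans
      (by gcongr; exact log_natAbs_le_logWeight j (by simpa using hj))
  have hN := mul_cube_le_four_mul_log_mul_sum_sq hM hcard
  -- The primes dividing `k j` contribute `4 N L / (c M)`, the others `2 d N L / (c M)`,
  -- and `4 + 2 d ≤ 8 d`.
  have hA' : A * (c * M) ≤ 4 * N * L := by
    refine le_of_mul_le_mul_right ?_ hlog
    calc A * (c * M) * Real.log M = c * M * (A * Real.log M) := by ring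
      _ ≤ c * M * (M ^ 2 * L) := by gcongr
      _ = L * (c * M ^ 3) := by ring
      _ ≤ L * (4 * Real.log M * N) := by gcongr
      _ = 4 * N * L * Real.log M := by ring
  have hS : d * S * (c * M) ≤ 2 * d * N * L := by
    calc d * S * (c * M) = c * d * (M * S) := by ring
      _ ≤ 1 * d * (2 * N) :=
        mul_le_mul (by gcongr) mul_sum_le_two_mul_sum_sq (by positivity) (by positivity)
      _ = 2 * d * N * 1 := by ring
      _ ≤ 2 * d * N * L := by gcongr
  have hNL : N * L ≤ d * (N * L) := le_mul_of_one_le_left (by positivity) hd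
  refine hcount.trans ?_
  rw [show N * (8 * d / (c * M) * L) = 8 * d * N * L / (c * M) by ring,
    le_div_iff₀ (by positivity), add_mul]
  nlinarith [mul_nonneg (Nat.cast_nonneg (α := ℝ) d) (by positivity : 0 ≤ N * L)]

lemma norm_sum_fourierExp_compositeKorobov_le (hM : 2 ≤ M) {c : ℝ} (hc0 : 0 < c) (hc1 : c < 1)
    (hcard : c * M / Real.log M ≤ #(primesInDyadic M)) {k : Fin d → ℤ} (hk : k ≠ 0) :
    ‖∑ i ∈ compositeKorobovIndex M, fourierExp k (korobovPoint i.1 i.2.1 i.2.2)‖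
      ≤ #(compositeKorobovIndex M) * (8 * d / (c * M) * logWeight k) := by
  rw [sum_compositeKorobovIndex fun p a n => fourierExp k (korobovPoint p a n),
    sum_congr rfl fun p hp =>
      sum_fourierExp_korobovPoint (mem_primesInDyadic.1 hp).1.ne_zero k,
    card_compositeKorobovIndex]
  exact_mod_cast sum_mul_korobovCount_le hM hc0 hc1 hcard hk

end CompositeKorobov

theorem composite_korobov_U_worst_case_error_general (M : ℕ) (hM : 2 ≤ M)
    (c : ℝ) (hc0 : 0 < c) (hc1 : c < 1)
    (hcard : c * M / Real.log M ≤ ((primesInDyadic M).card : ℝ))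
    (d : ℕ)
    (f : (Fin d → ℝ) → ℂ) (coef : (Fin d → ℤ) → ℂ)
    (hnorm : Summable fun k : Fin d → ℤ =>
      ‖coef k‖ *
        max 1 (Real.log ((Finset.univ.sup fun j : Fin d => (k j).natAbs : ℕ) : ℝ)))
    (hf : ∀ x : Fin d → ℝ, f x = ∑' k : Fin d → ℤ,
      coef k * Complex.exp (2 * Real.pi * Complex.I * ∑ j : Fin d, (k j : ℂ) * (x j : ℂ))) :
    ‖coef 0 - (1 / ((∑ p ∈ primesInDyadic M, p ^ 2 : ℕ) : ℂ)) *
        ∑ p ∈ primesInDyadic M, ∑ a ∈ Finset.range p, ∑ n ∈ Finset.range p,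
          f (fun j : Fin d => Int.fract ((a : ℝ) * (n : ℝ) ^ ((j : ℕ) + 1) / p))‖ ≤
      8 * d / (c * M) *
        (∑' k : Fin d → ℤ, ‖coef k‖ *
          max 1 (Real.log ((Finset.univ.sup fun j : Fin d => (k j).natAbs : ℕ) : ℝ))) ∧
    ‖coef 0 - (1 / ((∑ p ∈ primesInDyadic M, p ^ 2 : ℕ) : ℂ)) *
        ∑ p ∈ primesInDyadic M, ∑ a ∈ Finset.range p, ∑ n ∈ Finset.range p,
          f (fun j : Fin d => Int.fract ((a : ℝ) * (n : ℝ) ^ ((j : ℕ) + 1) / p))‖ ≤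
      8 * d / (c * ((∑ p ∈ primesInDyadic M, p ^ 2 : ℕ) : ℝ) ^ ((1 : ℝ) / 3)) *
        (∑' k : Fin d → ℤ, ‖coef k‖ *
          max 1 (Real.log ((Finset.univ.sup fun j : Fin d => (k j).natAbs : ℕ) : ℝ))) := by
  have hlog : 0 < Real.log M := Real.log_pos (by exact_mod_cast hM)
  have hs := compositeKorobovIndex_nonempty <|
    card_pos.1 (by exact_mod_cast (by positivity : 0 < c * M / Real.log M).trans_le hcard)
  have hnorm' : Summable fun k => ‖coef k‖ * logWeight k := hnorm
  have habs : Summable fun k => ‖coef k‖ :=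
    hnorm'.of_nonneg_of_le (fun k => norm_nonneg _)
      fun k => le_mul_of_one_le_right (norm_nonneg _) (one_le_logWeight k)
  have herror := norm_coef_zero_sub_average_le habs hf hs
    (fun i => korobovPoint i.1 i.2.1 i.2.2) (w := fun k => 8 * d / (c * M) * logWeight k)
    (by simpa only [mul_left_comm] using hnorm'.mul_left (8 * d / (c * M)))
    (mul_nonneg (by positivity) (zero_le_one.trans (one_le_logWeight 0)))
    fun k hk => norm_sum_fourierExp_compositeKorobov_le hM hc0 hc1 hcard hk
  simp only [mul_left_comm _ (8 * (d : ℝ) / (c * M)), tsum_mul_left,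
    sum_compositeKorobovIndex fun p a n => f (korobovPoint p a n), card_compositeKorobovIndex]
    at herror
  have hN : 0 < ((∑ p ∈ primesInDyadic M, p ^ 2 : ℕ) : ℝ) := by
    exact_mod_cast card_compositeKorobovIndex (M := M) ▸ hs.card_pos
  refine ⟨herror, herror.trans (mul_le_mul_of_nonneg_right ?_
    (tsum_nonneg fun k => mul_nonneg (norm_nonneg _) (zero_le_one.trans (one_le_logWeight k))))⟩
  gcongr
  exact cast_sum_sq_primesInDyadic_rpow_le

/-- Let `M ≥ 2`, `c ∈ (0,1)` with `|𝑃_M| ≥ c·M/log M`, `d ≥ 1`, and let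
`f` be given by an absolutely convergent Fourier series with coefficients `coef` whose
weighted norm `‖f‖ = ∑_{k∈ℤᵈ} |coef k| max(1, log|k|_∞)` is finite. Then the QMC rule
based on the composite Korobov point set `U_{M,d}^comp` satisfies
`|coef 0 − (1/N_U) ∑_{p∈𝑃_M} ∑_{a=0}^{p-1} ∑_{n=0}^{p-1} f(x_{a,n}⁽ᵖ⁾)| ≤ (8d/(cM))·‖f‖`,
and consequently (since `N_U ≤ M³`) the error is at most `(8d/(c·N_U^{1/3}))·‖f‖`. -/
theorem composite_korobov_U_worst_case_error (M : ℕ) (hM : 2 ≤ M)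
    (c : ℝ) (hc0 : 0 < c) (hc1 : c < 1)
    (hcard : c * M / Real.log M ≤ ((primesInDyadic M).card : ℝ))
    (d : ℕ) (hd : 1 ≤ d)
    (f : (Fin d → ℝ) → ℂ) (coef : (Fin d → ℤ) → ℂ)
    (hnorm : Summable fun k : Fin d → ℤ =>
      ‖coef k‖ *
        max 1 (Real.log ((Finset.univ.sup fun j : Fin d => (k j).natAbs : ℕ) : ℝ)))
    (hf : ∀ x : Fin d → ℝ, f x = ∑' k : Fin d → ℤ,
      coef k * Complex.exp (2 * Real.pi * Complex.I * ∑ j : Fin d, (k j : ℂ) * (x j : ℂ))) :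
    ‖coef 0 - (1 / ((∑ p ∈ primesInDyadic M, p ^ 2 : ℕ) : ℂ)) *
        ∑ p ∈ primesInDyadic M, ∑ a ∈ Finset.range p, ∑ n ∈ Finset.range p,
          f (fun j : Fin d => Int.fract ((a : ℝ) * (n : ℝ) ^ ((j : ℕ) + 1) / p))‖ ≤
      8 * d / (c * M) *
        (∑' k : Fin d → ℤ, ‖coef k‖ *
          max 1 (Real.log ((Finset.univ.sup fun j : Fin d => (k j).natAbs : ℕ) : ℝ))) ∧
    ‖coef 0 - (1 / ((∑ p ∈ primesInDyadic M, p ^ 2 : ℕ) : ℂ)) *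
        ∑ p ∈ primesInDyadic M, ∑ a ∈ Finset.range p, ∑ n ∈ Finset.range p,
          f (fun j : Fin d => Int.fract ((a : ℝ) * (n : ℝ) ^ ((j : ℕ) + 1) / p))‖ ≤
      8 * d / (c * ((∑ p ∈ primesInDyadic M, p ^ 2 : ℕ) : ℝ) ^ ((1 : ℝ) / 3)) *
        (∑' k : Fin d → ℤ, ‖coef k‖ *
          max 1 (Real.log ((Finset.univ.sup fun j : Fin d => (k j).natAbs : ℕ) : ℝ))) :=
  composite_korobov_U_worst_case_error_general M hM c hc0 hc1 hcard d f coef hnorm hf
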